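/- arXiv:1112.0844 — 7 statements merged into one kernel-verified Lean document; each statement's English description precedes it below -/
import Mathlib

section
/- Let S ⊆ ℝ^k be an open set and let a, ξ : S → ℝ^k be continuously differentiable maps. Define, for each x ∈ S, the real alternating bilinear form G_x on ℝ^k × ℝ^k (the curvature F of the SYZ-transformed connection ∇̌ = d + 2π√−1(Σ_j a_j dx_j + Σ_j ξ_j dy_j) divided by 2π√−1) by G_x((u_1,w_1),(u_2,w_2)) = ⟨u_2, Da(x)u_1⟩ − ⟨u_1, Da(x)u_2⟩ + ⟨w_2, Dξ(x)u_1⟩ − ⟨w_1, Dξ(x)u_2⟩, and let J : ℝ^k × ℝ^k → ℝ^k × ℝ^k, J(u,w) = (−w,u), be the standard complex structure. Then G_x(JX_1, JX_2) = G_x(X_1, X_2) for all x ∈ S and all X_1, X_2 ∈ ℝ^k × ℝ^k — i.e., the curvature is of type (1,1), equivalently its (0,2)-part and (2,0)-part both vanish — if and only if both Da(x) and Dξ(x) are symmetric linear maps for every x ∈ S (equivalently, the Lagrangian condition ∂ξ_j/∂x_l = ∂ξ_l/∂x_j and the flatness condition ∂a_j/∂x_l = ∂a_l/∂x_j both hold).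 -/
/-!
Split `X = (u, w)`. Evaluating the `J`-invariance of `G_x` on the pairs `((0, u), (0, v))` and
`((u, 0), (0, v))` gives exactly the symmetry of `Da(x)` and of `Dξ(x)`. Conversely, when `Da(x)`
is symmetric its part of `G_x` vanishes, and when `Dξ(x)` is also symmetric, what is left,
`⟨w₂, Dξ(x)u₁⟩ − ⟨w₁, Dξ(x)u₂⟩`, is visibly unchanged by `(u, w) ↦ (−w, u)`.
-/

open scoped RealInnerProductSpace

variable {E : Type*} [NormedAddCommGroup E] [InnerProductSpace ℝ E]

theorem LinearMap.IsSymmetric.real_inner_apply_comm {T : E →ₗ[ℝ] E} (hT : T.IsSymmetric)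
    (x y : E) : ⟪x, T y⟫ = ⟪y, T x⟫ := by
  rw [← hT, real_inner_comm]

theorem LinearMap.isSymmetric_iff_inner_map_comm (T : E →ₗ[ℝ] E) :
    T.IsSymmetric ↔ ∀ u v : E, ⟪T u, v⟫ = ⟪T v, u⟫ := by
  simp only [LinearMap.IsSymmetric, real_inner_comm (T _)]

namespace SYZ

def curvatureForm (A B : E →ₗ[ℝ] E) (X₁ X₂ : E × E) : ℝ :=
  ⟪X₂.1, A X₁.1⟫ - ⟪X₁.1, A X₂.1⟫ + ⟪X₂.2, B X₁.1⟫ - ⟪X₁.2, B X₂.1⟫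

def complexStructure (X : E × E) : E × E := (-X.2, X.1)

variable (A B : E →ₗ[ℝ] E)

theorem curvatureForm_complexStructure (X₁ X₂ : E × E) :
    curvatureForm A B (complexStructure X₁) (complexStructure X₂) =
      ⟪X₂.2, A X₁.2⟫ - ⟪X₁.2, A X₂.2⟫ - ⟪X₂.1, B X₁.2⟫ + ⟪X₁.1, B X₂.2⟫ := by
  simp only [curvatureForm, complexStructure, map_neg, inner_neg_left, inner_neg_right, neg_neg]
  ring

theorem curvatureForm_of_isSymmetric (hA : A.IsSymmetric) (X₁ X₂ : E × E) :
    curvatureForm A B X₁ X₂ = ⟪X₂.2, B X₁.1⟫ - ⟪X₁.2, B X₂.1⟫ := by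
  rw [curvatureForm, hA.real_inner_apply_comm X₂.1]
  ring

theorem curvatureForm_complexStructure_eq_iff :
    (∀ X₁ X₂ : E × E,
        curvatureForm A B (complexStructure X₁) (complexStructure X₂) = curvatureForm A B X₁ X₂) ↔
      A.IsSymmetric ∧ B.IsSymmetric := by
  constructor
  · intro h
    refine ⟨fun u v => ?_, fun u v => ?_⟩
    · have huv := h (0, u) (0, v)
      rw [curvatureForm_complexStructure] at huv
      simp only [curvatureForm, map_zero, inner_zero_left, inner_zero_right] at huv
      rw [real_inner_comm]
      linarith
    · have huv := h (u, 0) (0, v)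
      rw [curvatureForm_complexStructure] at huv
      simp only [curvatureForm, map_zero, inner_zero_left, inner_zero_right] at huv
      rw [real_inner_comm]
      linarith
  · rintro ⟨hA, hB⟩ X₁ X₂
    rw [curvatureForm_complexStructure, curvatureForm_of_isSymmetric A B hA,
      hA.real_inner_apply_comm X₂.2, hB.real_inner_apply_comm X₁.1,
      hB.real_inner_apply_comm X₂.1]
    ring

end SYZ

theorem stmt_2_general (k : ℕ)
    (S : Set (EuclideanSpace ℝ (Fin k)))
    (a ξ : EuclideanSpace ℝ (Fin k) → EuclideanSpace ℝ (Fin k))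
    -- the curvature divided by 2π√−1
    (G : EuclideanSpace ℝ (Fin k) →
      (EuclideanSpace ℝ (Fin k) × EuclideanSpace ℝ (Fin k)) →
      (EuclideanSpace ℝ (Fin k) × EuclideanSpace ℝ (Fin k)) → ℝ)
    (hG : ∀ x u₁ w₁ u₂ w₂, G x (u₁, w₁) (u₂, w₂) =
      ⟪u₂, fderiv ℝ a x u₁⟫ - ⟪u₁, fderiv ℝ a x u₂⟫ +
      ⟪w₂, fderiv ℝ ξ x u₁⟫ - ⟪w₁, fderiv ℝ ξ x u₂⟫)
    -- the standard complex structure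
    (J : (EuclideanSpace ℝ (Fin k) × EuclideanSpace ℝ (Fin k)) →
      (EuclideanSpace ℝ (Fin k) × EuclideanSpace ℝ (Fin k)))
    (hJ : ∀ u w, J (u, w) = (-w, u)) :
    (∀ x ∈ S, ∀ X₁ X₂ : EuclideanSpace ℝ (Fin k) × EuclideanSpace ℝ (Fin k),
        G x (J X₁) (J X₂) = G x X₁ X₂) ↔
      (∀ x ∈ S, (∀ u v : EuclideanSpace ℝ (Fin k),
          ⟪fderiv ℝ a x u, v⟫ = ⟪fderiv ℝ a x v, u⟫) ∧
        (∀ u v : EuclideanSpace ℝ (Fin k),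
          ⟪fderiv ℝ ξ x u, v⟫ = ⟪fderiv ℝ ξ x v, u⟫)) := by
  have hG' : ∀ x, G x = SYZ.curvatureForm (fderiv ℝ a x : _ →ₗ[ℝ] _) (fderiv ℝ ξ x) := by
    intro x
    ext ⟨u₁, w₁⟩ ⟨u₂, w₂⟩
    exact hG x u₁ w₁ u₂ w₂
  have hJ' : J = SYZ.complexStructure := funext fun ⟨u, w⟩ => hJ u w
  simp only [hG', hJ', SYZ.curvatureForm_complexStructure_eq_iff,
    LinearMap.isSymmetric_iff_inner_map_comm, ContinuousLinearMap.coe_coe]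

/-- The curvature form
`G_x((u₁,w₁),(u₂,w₂)) = ⟨u₂,Da(x)u₁⟩ − ⟨u₁,Da(x)u₂⟩ + ⟨w₂,Dξ(x)u₁⟩ − ⟨w₁,Dξ(x)u₂⟩`
of the SYZ-transformed connection is of type (1,1) with respect to the standard complex
structure `J(u,w) = (−w,u)` — i.e. `G_x(JX₁,JX₂) = G_x(X₁,X₂)` for all `x ∈ S` — iff both
`Da(x)` and `Dξ(x)` are symmetric for every `x ∈ S`. -/
theorem stmt_2 (k : ℕ)
    (S : Set (EuclideanSpace ℝ (Fin k))) (hS : IsOpen S)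
    (a ξ : EuclideanSpace ℝ (Fin k) → EuclideanSpace ℝ (Fin k))
    (ha : ContDiffOn ℝ 1 a S) (hξ : ContDiffOn ℝ 1 ξ S)
    -- the curvature divided by 2π√−1
    (G : EuclideanSpace ℝ (Fin k) →
      (EuclideanSpace ℝ (Fin k) × EuclideanSpace ℝ (Fin k)) →
      (EuclideanSpace ℝ (Fin k) × EuclideanSpace ℝ (Fin k)) → ℝ)
    (hG : ∀ x u₁ w₁ u₂ w₂, G x (u₁, w₁) (u₂, w₂) =
      ⟪u₂, fderiv ℝ a x u₁⟫ - ⟪u₁, fderiv ℝ a x u₂⟫ +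
      ⟪w₂, fderiv ℝ ξ x u₁⟫ - ⟪w₁, fderiv ℝ ξ x u₂⟫)
    -- the standard complex structure
    (J : (EuclideanSpace ℝ (Fin k) × EuclideanSpace ℝ (Fin k)) →
      (EuclideanSpace ℝ (Fin k) × EuclideanSpace ℝ (Fin k)))
    (hJ : ∀ u w, J (u, w) = (-w, u)) :
    (∀ x ∈ S, ∀ X₁ X₂ : EuclideanSpace ℝ (Fin k) × EuclideanSpace ℝ (Fin k),
        G x (J X₁) (J X₂) = G x X₁ X₂) ↔
      (∀ x ∈ S, (∀ u v : EuclideanSpace ℝ (Fin k),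
          ⟪fderiv ℝ a x u, v⟫ = ⟪fderiv ℝ a x v, u⟫) ∧
        (∀ u v : EuclideanSpace ℝ (Fin k),
          ⟪fderiv ℝ ξ x u, v⟫ = ⟪fderiv ℝ ξ x v, u⟫)) :=
  stmt_2_general k S a ξ G hG J hJ
end

section
/- Let f : ℂ → ℂ be a polynomial with distinct zeros and let Y = {(u,v,z) ∈ ℂ² × ℂˣ : uv = f(z)}, equipped at p = (u,v,z) ∈ Y with the Kähler form ω_p(X_1,X_2) = Im(a_1·conj(a_2)) + Im(b_1·conj(b_2)) + Im(c_1·conj(c_2))/|z|² for X_i = (a_i,b_i,c_i) ∈ ℂ³. Let p = (u,v,z) ∈ Y with (u,v) ≠ (0,0). Then the fibers of the map ρ(u,v,z) = (log|z|, (|u|²−|v|²)/2) are isotropic at p: for any two vectors X_1 = (a_1,b_1,c_1) and X_2 = (a_2,b_2,c_2) in ℂ³ satisfying, for j = 1,2, the tangency conditions v·a_j + u·b_j = f′(z)·c_j, Re(conj(z)·c_j) = 0, and Re(conj(u)·a_j) − Re(conj(v)·b_j) = 0, one has ω_p(X_1,X_2) = 0. -/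
open Complex

/-- The Kähler form `ω = −(√−1/2)(du∧dū + dv∧dv̄ + dz∧dz̄/|z|²)` of `Y ⊆ ℂ² × ℂˣ` at the
point `p = (u,v,z)`, evaluated on vectors `Xᵢ = (aᵢ,bᵢ,cᵢ) ∈ ℂ³`:
`ω_p(X₁,X₂) = Im(a₁·conj(a₂)) + Im(b₁·conj(b₂)) + Im(c₁·conj(c₂))/|z|²`. -/
noncomputable def omegaY (p X₁ X₂ : ℂ × ℂ × ℂ) : ℝ :=
  (X₁.1 * (starRingEnd ℂ) X₂.1).im + (X₁.2.1 * (starRingEnd ℂ) X₂.2.1).im +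
    (X₁.2.2 * (starRingEnd ℂ) X₂.2.2).im / Complex.normSq p.2.2

/-!
The matrix `M = [[v, u], [ū, -v̄]]` satisfies `M* M = (|u|² + |v|²) I`, so the Hermitian pairing
of `(a₁, b₁)` with `(a₂, b₂)` is, up to the positive factor `|u|² + |v|²`, the pairing of
`f'(z) c₁` with `f'(z) c₂` plus that of `ū a₁ - v̄ b₁` with `ū a₂ - v̄ b₂`. Tangency to the level
sets of `log |z|` and of `(|u|² - |v|²)/2` makes `c₁, c₂` real multiples of `i z` and the numbers
`ū aⱼ - v̄ bⱼ` purely imaginary, so every pairing involved is real and `ω` vanishes.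
-/

open scoped ComplexConjugate

namespace Complex

theorem im_mul_conj_eq_zero_of_re_eq_zero {x y : ℂ} (hx : x.re = 0) (hy : y.re = 0) :
    (x * conj y).im = 0 := by
  simp [mul_im, hx, hy]

theorem im_mul_mul_conj_mul (t x y : ℂ) :
    (t * x * conj (t * y)).im = normSq t * (x * conj y).im := by
  have h : t * x * conj (t * y) = (normSq t : ℂ) * (x * conj y) := by
    rw [map_mul, ← mul_conj]
    ring
  rw [h, im_ofReal_mul]

theorem im_mul_conj_eq_zero_of_re_conj_mul_eq_zero {z c₁ c₂ : ℂ} (hz : z ≠ 0)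
    (h₁ : (conj z * c₁).re = 0) (h₂ : (conj z * c₂).re = 0) :
    (c₁ * conj c₂).im = 0 := by
  have h := im_mul_conj_eq_zero_of_re_eq_zero h₁ h₂
  rw [im_mul_mul_conj_mul] at h
  exact (mul_eq_zero.mp h).resolve_left (by simpa using hz)

theorem normSq_add_normSq_mul_pairing (u v a₁ b₁ a₂ b₂ : ℂ) :
    ((normSq u + normSq v : ℝ) : ℂ) * (a₁ * conj a₂ + b₁ * conj b₂) =
      (v * a₁ + u * b₁) * conj (v * a₂ + u * b₂) +
        (conj u * a₁ - conj v * b₁) * conj (conj u * a₂ - conj v * b₂) := by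
  push_cast
  rw [← mul_conj u, ← mul_conj v]
  simp only [map_add, map_sub, map_mul, conj_conj]
  ring

theorem normSq_add_normSq_pos {u v : ℂ} (huv : (u, v) ≠ (0, 0)) :
    0 < normSq u + normSq v := by
  rcases not_and_or.mp (mt Prod.ext_iff.mpr huv) with hu | hv
  · exact add_pos_of_pos_of_nonneg (normSq_pos.mpr hu) (normSq_nonneg v)
  · exact add_pos_of_nonneg_of_pos (normSq_nonneg u) (normSq_pos.mpr hv)

theorem im_mul_conj_add_im_mul_conj_eq_zero {u v a₁ b₁ a₂ b₂ : ℂ} (huv : (u, v) ≠ (0, 0))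
    (hY : ((v * a₁ + u * b₁) * conj (v * a₂ + u * b₂)).im = 0)
    (h₁ : (conj u * a₁).re - (conj v * b₁).re = 0)
    (h₂ : (conj u * a₂).re - (conj v * b₂).re = 0) :
    (a₁ * conj a₂).im + (b₁ * conj b₂).im = 0 := by
  have hμ : ((conj u * a₁ - conj v * b₁) * conj (conj u * a₂ - conj v * b₂)).im = 0 :=
    im_mul_conj_eq_zero_of_re_eq_zero (by rwa [sub_re]) (by rwa [sub_re])
  have h := congrArg im (normSq_add_normSq_mul_pairing u v a₁ b₁ a₂ b₂)
  rw [add_im, hY, hμ, add_zero, im_ofReal_mul, add_im] at h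
  exact (mul_eq_zero.mp h).resolve_left (normSq_add_normSq_pos huv).ne'

end Complex

theorem stmt_4_general (f : Polynomial ℂ)
    (u v z : ℂ) (hz : z ≠ 0)
    (huv : (u, v) ≠ ((0 : ℂ), (0 : ℂ)))
    (a₁ b₁ c₁ a₂ b₂ c₂ : ℂ)
    (htan₁ : v * a₁ + u * b₁ = (Polynomial.derivative f).eval z * c₁)
    (htan₂ : v * a₂ + u * b₂ = (Polynomial.derivative f).eval z * c₂)
    (hlog₁ : ((starRingEnd ℂ) z * c₁).re = 0)
    (hlog₂ : ((starRingEnd ℂ) z * c₂).re = 0)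
    (hmu₁ : ((starRingEnd ℂ) u * a₁).re - ((starRingEnd ℂ) v * b₁).re = 0)
    (hmu₂ : ((starRingEnd ℂ) u * a₂).re - ((starRingEnd ℂ) v * b₂).re = 0) :
    omegaY (u, v, z) (a₁, b₁, c₁) (a₂, b₂, c₂) = 0 := by
  have hc : (c₁ * conj c₂).im = 0 := im_mul_conj_eq_zero_of_re_conj_mul_eq_zero hz hlog₁ hlog₂
  have hab : (a₁ * conj a₂).im + (b₁ * conj b₂).im = 0 := by
    refine im_mul_conj_add_im_mul_conj_eq_zero huv ?_ hmu₁ hmu₂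
    rw [htan₁, htan₂, im_mul_mul_conj_mul, hc, mul_zero]
  simp only [omegaY]
  rw [hc, zero_div, add_zero, hab]

/-- The fibers of the Gross fibration
`ρ(u,v,z) = (log|z|, (|u|²−|v|²)/2)` on `Y = {uv = f(z)} ⊆ ℂ² × ℂˣ` are isotropic at every
point `p = (u,v,z)` with `(u,v) ≠ (0,0)`: any two vectors of `ℂ³` tangent to `Y` and to the
level sets of `log|z|` and of `(|u|²−|v|²)/2` at `p` pair to zero under `ω_p`. -/
theorem stmt_4 (f : Polynomial ℂ)
    (hf : ∀ w : ℂ, f.eval w = 0 → (Polynomial.derivative f).eval w ≠ 0)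
    (u v z : ℂ) (hz : z ≠ 0) (hY : u * v = f.eval z)
    (huv : (u, v) ≠ ((0 : ℂ), (0 : ℂ)))
    (a₁ b₁ c₁ a₂ b₂ c₂ : ℂ)
    (htan₁ : v * a₁ + u * b₁ = (Polynomial.derivative f).eval z * c₁)
    (htan₂ : v * a₂ + u * b₂ = (Polynomial.derivative f).eval z * c₂)
    (hlog₁ : ((starRingEnd ℂ) z * c₁).re = 0)
    (hlog₂ : ((starRingEnd ℂ) z * c₂).re = 0)
    (hmu₁ : ((starRingEnd ℂ) u * a₁).re - ((starRingEnd ℂ) v * b₁).re = 0)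
    (hmu₂ : ((starRingEnd ℂ) u * a₂).re - ((starRingEnd ℂ) v * b₂).re = 0) :
    omegaY (u, v, z) (a₁, b₁, c₁) (a₂, b₂, c₂) = 0 :=
  stmt_4_general f u v z hz huv a₁ b₁ c₁ a₂ b₂ c₂ htan₁ htan₂ hlog₁ hlog₂ hmu₁ hmu₂
end

section
/- Let f : ℂ → ℂ be a polynomial with distinct zeros and Y = {(u,v,z) ∈ ℂ² × ℂˣ : uv = f(z)}. For p = (u,v,z) ∈ Y, the differential at p of the Gross fibration ρ(u,v,z) = (log|z|, (|u|²−|v|²)/2) is the ℝ-linear map Dρ_p : T_pY → ℝ², (a,b,c) ↦ (Re(conj(z)·c)/|z|², Re(conj(u)·a) − Re(conj(v)·b)), where T_pY = {(a,b,c) ∈ ℂ³ : v·a + u·b = f′(z)·c}. Then Dρ_p is surjective if and only if (u,v) ≠ (0,0). Moreover, (u,v) = (0,0) for a point of Y forces f(z) = 0; hence ρ fails to be a submersion at p ∈ Y exactly when u = 0, v = 0 and f(z) = 0, i.e., at the fixed points of the circle action (u,v,z) ↦ (e^{2π√−1 t}u, e^{−2π√−1 t}v, z). -/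
open Complex ComplexConjugate

/- On the tangent space the `c`-component only enters the constraint `v a + u b = f'(z) c`, so `c`
can be chosen to realise the `log|z|` component; the remaining system in `(a, b)` is solved by
`a = (t u + w v̄) / N`, `b = (w ū - t v) / N` with `N = |u|² + |v|²`, which needs `(u, v) ≠ 0`.
At `u = v = 0` the second component of `Dρ_p` vanishes identically. -/

theorem Complex.re_conj_mul_ofReal_mul_div_normSq {z : ℂ} (hz : z ≠ 0) (t : ℝ) :
    (conj z * (t * z)).re / normSq z = t := by
  rw [mul_left_comm, ← normSq_eq_conj_mul_self, ← ofReal_mul, ofReal_re,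
    mul_div_assoc, div_self (normSq_eq_zero.not.mpr hz), mul_one]

theorem Complex.exists_mul_add_mul_eq_and_re_sub_re_eq {u v : ℂ} (huv : (u, v) ≠ (0, 0))
    (w : ℂ) (t : ℝ) :
    ∃ a b : ℂ, v * a + u * b = w ∧ (conj u * a).re - (conj v * b).re = t := by
  have hN : (normSq u + normSq v : ℂ) ≠ 0 := by
    have : 0 < normSq u + normSq v := by
      rcases eq_or_ne u 0 with rfl | hu
      · have hv : v ≠ 0 := fun hv => huv (by rw [hv])
        simpa using normSq_pos.mpr hv
      · exact add_pos_of_pos_of_nonneg (normSq_pos.mpr hu) (normSq_nonneg v)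
    exact_mod_cast this.ne'
  have hsum : v * (t * u + w * conj v) + u * (w * conj u - t * v) =
      w * (normSq u + normSq v) := by
    simp only [normSq_eq_conj_mul_self]; ring
  have hdiff : conj u * (t * u + w * conj v) - conj v * (w * conj u - t * v) =
      t * (normSq u + normSq v) := by
    simp only [normSq_eq_conj_mul_self]; ring
  refine ⟨(t * u + w * conj v) / (normSq u + normSq v),
    (w * conj u - t * v) / (normSq u + normSq v), ?_, ?_⟩
  · rw [mul_div_assoc', mul_div_assoc', ← add_div, hsum, mul_div_cancel_right₀ _ hN]
  · rw [← sub_re, mul_div_assoc', mul_div_assoc', div_sub_div_same, hdiff,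
      mul_div_cancel_right₀ _ hN, ofReal_re]

theorem stmt_6_general (f : Polynomial ℂ)
    (u v z : ℂ) (hz : z ≠ 0) (hY : u * v = f.eval z) :
    ((∀ q : ℝ × ℝ, ∃ a b c : ℂ,
        v * a + u * b = (Polynomial.derivative f).eval z * c ∧
        (((starRingEnd ℂ) z * c).re / Complex.normSq z,
          ((starRingEnd ℂ) u * a).re - ((starRingEnd ℂ) v * b).re) = q) ↔
      (u, v) ≠ ((0 : ℂ), (0 : ℂ))) ∧
    ((u, v) = ((0 : ℂ), (0 : ℂ)) → f.eval z = 0) := by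
  have hfz : (u, v) = ((0 : ℂ), (0 : ℂ)) → f.eval z = 0 := by
    intro h
    rw [← hY, (Prod.mk.inj h).1, zero_mul]
  refine ⟨⟨fun hsurj h0 => ?_, fun huv q => ?_⟩, hfz⟩
  · obtain ⟨a, b, c, -, hq⟩ := hsurj (0, 1)
    obtain ⟨rfl, rfl⟩ := Prod.mk.inj h0
    simp at hq
  · obtain ⟨a, b, hab, hre⟩ :=
      exists_mul_add_mul_eq_and_re_sub_re_eq huv ((Polynomial.derivative f).eval z * (q.1 * z)) q.2
    exact ⟨a, b, q.1 * z, hab, Prod.ext (re_conj_mul_ofReal_mul_div_normSq hz q.1) hre⟩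

/-- For `p = (u,v,z)` on `Y = {uv = f(z)} ⊆ ℂ² × ℂˣ` with `f` having distinct
zeros, the differential `Dρ_p : T_pY → ℝ²`,
`(a,b,c) ↦ (Re(conj z·c)/|z|², Re(conj u·a) − Re(conj v·b))`, of the Gross fibration
`ρ(u,v,z) = (log|z|, (|u|²−|v|²)/2)` is surjective iff `(u,v) ≠ (0,0)`; moreover
`(u,v) = (0,0)` forces `f(z) = 0`, so `ρ` fails to be a submersion exactly at the fixed
points of the circle action. -/
theorem stmt_6 (f : Polynomial ℂ)
    (hf : ∀ w : ℂ, f.eval w = 0 → (Polynomial.derivative f).eval w ≠ 0)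
    (u v z : ℂ) (hz : z ≠ 0) (hY : u * v = f.eval z) :
    ((∀ q : ℝ × ℝ, ∃ a b c : ℂ,
        v * a + u * b = (Polynomial.derivative f).eval z * c ∧
        (((starRingEnd ℂ) z * c).re / Complex.normSq z,
          ((starRingEnd ℂ) u * a).re - ((starRingEnd ℂ) v * b).re) = q) ↔
      (u, v) ≠ ((0 : ℂ), (0 : ℂ))) ∧
    ((u, v) = ((0 : ℂ), (0 : ℂ)) → f.eval z = 0) :=
  stmt_6_general f u v z hz hY
end

section
/- Let f : ℂ → ℂ be a polynomial, s ∈ ℝ, and let φ : D̄ → ℂ³ be a map from the closed unit disk D̄ = {w ∈ ℂ : |w| ≤ 1} which is continuous on D̄ and holomorphic on the open disk, with components φ = (u,v,z). Suppose that φ(D̄) ⊆ Y, i.e., u(w)·v(w) = f(z(w)) and z(w) ≠ 0 for all w ∈ D̄, and that |z(w)| = e^s for all w with |w| = 1. Then z is constant on D̄. In particular, every holomorphic disk in Y with boundary on a Lagrangian torus fiber T_{s,λ} of the Gross fibration is contained in a single fiber of the projection π(u,v,z) = z. -/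
open Complex Metric Bornology

/-!
By the maximum modulus principle applied to `z` and to `1 / z` (which is holomorphic because
`z` does not vanish on `Y ⊆ ℂ² × ℂˣ`), the constant value `e^s` of `|z|` on the boundary circle
is both an upper and a lower bound for `|z|` on the disk. Hence `|z|` attains its maximum at the
centre, and a holomorphic function whose modulus has an interior maximum on a connected domain is
constant.
-/

namespace Complex

variable {E : Type*} [NormedAddCommGroup E] [NormedSpace ℂ E] [Nontrivial E]
  {g : E → ℂ} {U : Set E} {C : ℝ}

theorem norm_eq_of_forall_mem_frontier_norm_eq (hU : IsBounded U) (hg : DiffContOnCl ℂ g U)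
    (h₀ : ∀ x ∈ closure U, g x ≠ 0) (hC : ∀ x ∈ frontier U, ‖g x‖ = C) {x : E}
    (hx : x ∈ closure U) : ‖g x‖ = C := by
  have hle : ‖g x‖ ≤ C :=
    norm_le_of_forall_mem_frontier_norm_le hU hg (fun y hy => (hC y hy).le) hx
  have hinv_le : ‖g x‖⁻¹ ≤ C⁻¹ := by
    simpa only [Pi.inv_apply, norm_inv] using
      norm_le_of_forall_mem_frontier_norm_le hU (hg.inv h₀)
        (fun y hy => by rw [Pi.inv_apply, norm_inv, hC y hy]) hx
  have hpos : 0 < ‖g x‖ := norm_pos_iff.mpr (h₀ x hx)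
  refine le_antisymm hle (not_lt.mp fun hlt => hinv_le.not_gt ?_)
  exact inv_strictAnti₀ hpos hlt

theorem eqOn_closure_of_forall_mem_frontier_norm_eq (hU : IsBounded U) (hc : IsPreconnected U)
    (ho : IsOpen U) (hg : DiffContOnCl ℂ g U) (h₀ : ∀ x ∈ closure U, g x ≠ 0)
    (hC : ∀ x ∈ frontier U, ‖g x‖ = C) {x₀ : E} (hx₀ : x₀ ∈ U) :
    Set.EqOn g (Function.const E (g x₀)) (closure U) := by
  have hnorm {x} (hx : x ∈ closure U) : ‖g x‖ = C :=
    norm_eq_of_forall_mem_frontier_norm_eq hU hg h₀ hC hx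
  refine eqOn_closure_of_isPreconnected_of_isMaxOn_norm hc ho hg hx₀ fun x hx => ?_
  exact (hnorm (subset_closure hx)).trans_le (hnorm (subset_closure hx₀)).ge

end Complex

/-- A holomorphic disk `φ = (u,v,z) : D̄ → ℂ³` with image in
`Y = {uv = f(z)} ⊆ ℂ² × ℂˣ` and whose boundary satisfies `|z| = e^s` has constant third
component `z`; i.e. every holomorphic disk in `Y` with boundary on a Lagrangian torus fiber
`T_{s,λ}` of the Gross fibration is contained in a single fiber of the projection
`π(u,v,z) = z`. -/
theorem stmt_7 (f : Polynomial ℂ) (s : ℝ)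
    (φ : ℂ → ℂ × ℂ × ℂ) (u v z : ℂ → ℂ)
    (hφ : ∀ w : ℂ, φ w = (u w, v w, z w))
    (hcont : ContinuousOn φ (closedBall (0 : ℂ) 1))
    (hhol : DifferentiableOn ℂ φ (ball (0 : ℂ) 1))
    (hY : ∀ w ∈ closedBall (0 : ℂ) 1, u w * v w = f.eval (z w) ∧ z w ≠ 0)
    (hbdry : ∀ w : ℂ, ‖w‖ = 1 → ‖z w‖ = Real.exp s) :
    ∃ z₀ : ℂ, ∀ w ∈ closedBall (0 : ℂ) 1, z w = z₀ := by
  have hz : z = (fun p : ℂ × ℂ × ℂ => p.2.2) ∘ φ := funext fun w => by simp [hφ w]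
  have hzdisk : DiffContOnCl ℂ z (ball 0 1) := by
    rw [hz]
    exact (differentiable_snd.snd (𝕜 := ℂ)).comp_diffContOnCl (.mk_ball hhol hcont)
  have hclosure : closure (ball (0 : ℂ) 1) = closedBall 0 1 := closure_ball 0 one_ne_zero
  have hfrontier : frontier (ball (0 : ℂ) 1) = sphere 0 1 := frontier_ball 0 one_ne_zero
  have hconst := eqOn_closure_of_forall_mem_frontier_norm_eq (isBounded_ball (x := (0 : ℂ)))
    (convex_ball 0 1).isPreconnected isOpen_ball hzdisk
    (by rw [hclosure]; exact fun w hw => (hY w hw).2)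
    (by rw [hfrontier]; exact fun w hw => hbdry w (mem_sphere_zero_iff_norm.mp hw))
    (mem_ball_self one_pos)
  rw [hclosure] at hconst
  exact ⟨z 0, hconst⟩
end

section
/- Let f : ℂ → ℂ be a polynomial with distinct zeros, let Y = {(u,v,z) ∈ ℂ² × ℂˣ : uv = f(z)}, and for (s,λ) ∈ ℝ² let T_{s,λ} = {(u,v,z) ∈ Y : log|z| = s, (|u|²−|v|²)/2 = λ}. Fix s ∈ ℝ and λ ∈ ℝ with λ ≠ 0. Then there exists a nonconstant map φ : D̄ → ℂ³, continuous on the closed unit disk and holomorphic on the open disk, with φ(D̄) ⊆ Y and φ(∂D̄) ⊆ T_{s,λ}, if and only if f has a zero a ∈ ℂ with |a| = e^s. (For λ > 0 such a disk is given explicitly by φ(w) = (√(2λ)·w, 0, a), and for λ < 0 by φ(w) = (0, √(−2λ)·w, a).) Thus the wall — the locus of Lagrangian torus fibers bounding nonconstant holomorphic disks — is {(s,λ) : s = log|a_i| for some zero a_i of f}. -/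
open Complex Metric

/-- A holomorphic disk in `Y = {uv = f(z)} ⊆ ℂ² × ℂˣ` with boundary on the fiber
`T_{s,λ} = {log|z| = s, (|u|²−|v|²)/2 = λ}` of the Gross fibration: a map `φ : D̄ → ℂ³`,
continuous on the closed unit disk, holomorphic on its interior, with `φ(D̄) ⊆ Y` and
`φ(∂D̄) ⊆ T_{s,λ}`. -/
def IsHoloDiskOnFiber (f : Polynomial ℂ) (s lam : ℝ) (φ : ℂ → ℂ × ℂ × ℂ) : Prop :=
  ContinuousOn φ (closedBall (0 : ℂ) 1) ∧
  DifferentiableOn ℂ φ (ball (0 : ℂ) 1) ∧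
  (∀ w ∈ closedBall (0 : ℂ) 1, (φ w).1 * (φ w).2.1 = f.eval (φ w).2.2 ∧ (φ w).2.2 ≠ 0) ∧
  (∀ w : ℂ, ‖w‖ = 1 →
    Real.log ‖(φ w).2.2‖ = s ∧
    (‖(φ w).1‖ ^ 2 - ‖(φ w).2.1‖ ^ 2) / 2 = lam)

/-!
A holomorphic disk `(u, v, z)` with boundary on `T_{s,λ}` has `|z| = e^s` on the boundary circle
and `z` nowhere zero, so `z` and `1/z` are both bounded by their boundary values and `z` is a
constant `a` with `|a| = e^s`. If `f(a) ≠ 0`, then `uv = f(a)` forces `u` to be nowhere zero, and on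
the circle the pair `(|u|, |v|)` is pinned down by `|u||v| = |f(a)|` and `|u|² − |v|² = 2λ`; the same
argument makes `u`, hence `v = f(a)/u`, constant. Conversely a zero `a` of `f` on the circle
`|a| = e^s` carries the linear disks `w ↦ (√(2λ) w, 0, a)` or `w ↦ (0, √(−2λ) w, a)`.
-/

open Set Function Bornology in
theorem eqOn_closure_of_forall_mem_frontier_norm_eq {E : Type*} [NormedAddCommGroup E]
    [NormedSpace ℂ E] [Nontrivial E] {g : E → ℂ} {U : Set E} {c : E} {r : ℝ}
    (hU : IsBounded U) (hUc : IsPreconnected U) (hUo : IsOpen U) (hd : DiffContOnCl ℂ g U)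
    (hne : ∀ z ∈ closure U, g z ≠ 0) (hcU : c ∈ U) (hr : ∀ z ∈ frontier U, ‖g z‖ = r) :
    EqOn g (const E (g c)) (closure U) := by
  have hle : ∀ z ∈ closure U, ‖g z‖ ≤ r := fun z hz =>
    Complex.norm_le_of_forall_mem_frontier_norm_le hU hd (fun ζ hζ => (hr ζ hζ).le) hz
  have hgc : 0 < ‖g c‖ := norm_pos_iff.mpr (hne c (subset_closure hcU))
  -- the minimum modulus principle, as the maximum modulus principle for `1 / g`
  have hge : r ≤ ‖g c‖ := by
    have hinv : DiffContOnCl ℂ (fun z => (g z)⁻¹) U := hd.inv hne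
    have := Complex.norm_le_of_forall_mem_frontier_norm_le hU hinv
      (fun ζ hζ => (by rw [norm_inv, hr ζ hζ])) (subset_closure hcU)
    rw [norm_inv] at this
    exact (inv_le_inv₀ hgc (hgc.trans_le (hle c (subset_closure hcU)))).mp this
  refine Complex.eqOn_closure_of_isPreconnected_of_isMaxOn_norm hUc hUo hd hcU fun z hz => ?_
  exact (hle z (subset_closure hz)).trans hge

theorem eqOn_closedBall_of_forall_norm_eq {g : ℂ → ℂ} {r : ℝ}
    (hc : ContinuousOn g (closedBall 0 1)) (hd : DifferentiableOn ℂ g (ball 0 1))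
    (hne : ∀ w ∈ closedBall (0 : ℂ) 1, g w ≠ 0) (hr : ∀ w : ℂ, ‖w‖ = 1 → ‖g w‖ = r) :
    ∀ w ∈ closedBall (0 : ℂ) 1, g w = g 0 := by
  rw [← closure_ball (0 : ℂ) one_ne_zero] at hc hne ⊢
  refine eqOn_closure_of_forall_mem_frontier_norm_eq (r := r) isBounded_ball
    (convex_ball 0 1).isPreconnected isOpen_ball ⟨hd, hc⟩ hne (mem_ball_self one_pos) ?_
  rw [frontier_ball (0 : ℂ) one_ne_zero]
  exact fun w hw => hr w (mem_sphere_zero_iff_norm.mp hw)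

theorem eq_of_mul_eq_of_sq_sub_sq_eq {a b c d : ℝ} (ha : 0 ≤ a) (hb : 0 ≤ b) (hc : 0 ≤ c)
    (hd : 0 ≤ d) (hmul : a * b = c * d) (hsq : a ^ 2 - b ^ 2 = c ^ 2 - d ^ 2) : a = c := by
  by_contra hne
  rcases lt_or_gt_of_ne hne with h | h
  · have hbd : b < d := by nlinarith
    nlinarith [mul_lt_mul'' h hbd ha hb]
  · have hdb : d < b := by nlinarith
    nlinarith [mul_lt_mul'' h hdb hc hd]

namespace IsHoloDiskOnFiber

variable {f : Polynomial ℂ} {s lam : ℝ} {φ : ℂ → ℂ × ℂ × ℂ}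

theorem norm_snd_snd (hφ : IsHoloDiskOnFiber f s lam φ) {w : ℂ} (hw : ‖w‖ = 1) :
    ‖(φ w).2.2‖ = Real.exp s := by
  have hz : (φ w).2.2 ≠ 0 := (hφ.2.2.1 w (by simp [hw])).2
  rw [← (hφ.2.2.2 w hw).1, Real.exp_log (norm_pos_iff.mpr hz)]

theorem snd_snd_eq (hφ : IsHoloDiskOnFiber f s lam φ) :
    ∀ w ∈ closedBall (0 : ℂ) 1, (φ w).2.2 = (φ 0).2.2 :=
  eqOn_closedBall_of_forall_norm_eq hφ.1.snd.snd hφ.2.1.snd.snd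
    (fun w hw => (hφ.2.2.1 w hw).2) fun _ => hφ.norm_snd_snd

theorem norm_snd_snd_zero (hφ : IsHoloDiskOnFiber f s lam φ) : ‖(φ 0).2.2‖ = Real.exp s := by
  rw [← hφ.snd_snd_eq 1 (by simp)]
  exact hφ.norm_snd_snd (by simp)

theorem eq_of_eval_ne_zero (hφ : IsHoloDiskOnFiber f s lam φ)
    (hfa : f.eval (φ 0).2.2 ≠ 0) : ∀ w ∈ closedBall (0 : ℂ) 1, φ w = φ 0 := by
  have huv : ∀ w ∈ closedBall (0 : ℂ) 1, (φ w).1 * (φ w).2.1 = f.eval (φ 0).2.2 := fun w hw => by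
    rw [(hφ.2.2.1 w hw).1, hφ.snd_snd_eq w hw]
  have hu : ∀ w ∈ closedBall (0 : ℂ) 1, (φ w).1 ≠ 0 := fun w hw h0 =>
    hfa (by rw [← huv w hw, h0, zero_mul])
  have hsphere : ∀ w : ℂ, ‖w‖ = 1 → w ∈ closedBall (0 : ℂ) 1 := fun w hw => by simp [hw]
  have hu_circle : ∀ w : ℂ, ‖w‖ = 1 → ‖(φ w).1‖ = ‖(φ 1).1‖ := fun w hw =>
    eq_of_mul_eq_of_sq_sub_sq_eq (norm_nonneg _) (norm_nonneg _) (norm_nonneg _) (norm_nonneg _)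
      (by rw [← norm_mul, ← norm_mul, huv w (hsphere w hw), huv 1 (hsphere 1 (by simp))])
      (by linarith [(hφ.2.2.2 w hw).2, (hφ.2.2.2 1 (by simp)).2])
  have hu_eq := eqOn_closedBall_of_forall_norm_eq hφ.1.fst hφ.2.1.fst hu hu_circle
  have h0 : (0 : ℂ) ∈ closedBall (0 : ℂ) 1 := mem_closedBall_self zero_le_one
  intro w hw
  have hv_eq : (φ w).2.1 = (φ 0).2.1 :=
    mul_left_cancel₀ (hu 0 h0) (by rw [huv 0 h0, ← huv w hw, hu_eq w hw])
  exact Prod.ext (hu_eq w hw) (Prod.ext hv_eq (hφ.snd_snd_eq w hw))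

end IsHoloDiskOnFiber

theorem isHoloDiskOnFiber_linear {f : Polynomial ℂ} {s lam : ℝ} {p q a : ℂ} (hpq : p * q = 0)
    (hfa : f.eval a = 0) (ha : ‖a‖ = Real.exp s) (hlam : (‖p‖ ^ 2 - ‖q‖ ^ 2) / 2 = lam) :
    IsHoloDiskOnFiber f s lam (fun w => (p * w, q * w, a)) := by
  have ha0 : a ≠ 0 := by
    rintro rfl
    exact (Real.exp_pos s).ne' (by simpa using ha.symm)
  refine ⟨by fun_prop, by fun_prop, fun w _ => ⟨?_, ha0⟩, fun w hw => ⟨?_, ?_⟩⟩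
  · rw [hfa, mul_mul_mul_comm, hpq, zero_mul]
  · rw [ha, Real.log_exp]
  · simpa [norm_mul, hw] using hlam

theorem isHoloDiskOnFiber_of_pos {f : Polynomial ℂ} {s lam : ℝ} {a : ℂ} (hlam : 0 < lam)
    (hfa : f.eval a = 0) (ha : ‖a‖ = Real.exp s) :
    IsHoloDiskOnFiber f s lam (fun w => ((Real.sqrt (2 * lam) : ℂ) * w, (0 : ℂ), a)) := by
  have hp : (‖(Real.sqrt (2 * lam) : ℂ)‖ ^ 2 - ‖(0 : ℂ)‖ ^ 2) / 2 = lam := by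
    rw [Complex.norm_real, Real.norm_eq_abs, sq_abs, Real.sq_sqrt (by linarith), norm_zero]
    ring
  simpa using isHoloDiskOnFiber_linear (mul_zero _) hfa ha hp

theorem isHoloDiskOnFiber_of_neg {f : Polynomial ℂ} {s lam : ℝ} {a : ℂ} (hlam : lam < 0)
    (hfa : f.eval a = 0) (ha : ‖a‖ = Real.exp s) :
    IsHoloDiskOnFiber f s lam (fun w => ((0 : ℂ), (Real.sqrt (-(2 * lam)) : ℂ) * w, a)) := by
  have hq : (‖(0 : ℂ)‖ ^ 2 - ‖(Real.sqrt (-(2 * lam)) : ℂ)‖ ^ 2) / 2 = lam := by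
    rw [Complex.norm_real, Real.norm_eq_abs, sq_abs, Real.sq_sqrt (by linarith), norm_zero]
    ring
  simpa using isHoloDiskOnFiber_linear (zero_mul _) hfa ha hq

theorem stmt_9_general (f : Polynomial ℂ)
    (s lam : ℝ) (hlam : lam ≠ 0) :
    ((∃ φ : ℂ → ℂ × ℂ × ℂ, IsHoloDiskOnFiber f s lam φ ∧
        ¬ ∀ w₁ ∈ closedBall (0 : ℂ) 1, ∀ w₂ ∈ closedBall (0 : ℂ) 1, φ w₁ = φ w₂) ↔
      ∃ a : ℂ, f.eval a = 0 ∧ ‖a‖ = Real.exp s) ∧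
    (0 < lam → ∀ a : ℂ, f.eval a = 0 → ‖a‖ = Real.exp s →
      IsHoloDiskOnFiber f s lam
        (fun w => ((Real.sqrt (2 * lam) : ℂ) * w, (0 : ℂ), a))) ∧
    (lam < 0 → ∀ a : ℂ, f.eval a = 0 → ‖a‖ = Real.exp s →
      IsHoloDiskOnFiber f s lam
        (fun w => ((0 : ℂ), (Real.sqrt (-(2 * lam)) : ℂ) * w, a))) := by
  have h0 : (0 : ℂ) ∈ closedBall (0 : ℂ) 1 := mem_closedBall_self zero_le_one
  have h1 : (1 : ℂ) ∈ closedBall (0 : ℂ) 1 := by simp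
  refine ⟨⟨?_, ?_⟩, fun h _ => isHoloDiskOnFiber_of_pos h, fun h _ => isHoloDiskOnFiber_of_neg h⟩
  · rintro ⟨φ, hφ, hnc⟩
    refine ⟨(φ 0).2.2, ?_, hφ.norm_snd_snd_zero⟩
    by_contra hfa
    exact hnc fun w₁ h₁ w₂ h₂ => by
      rw [hφ.eq_of_eval_ne_zero hfa w₁ h₁, hφ.eq_of_eval_ne_zero hfa w₂ h₂]
  · rintro ⟨a, hfa, ha⟩
    rcases hlam.lt_or_gt with h | h
    · refine ⟨_, isHoloDiskOnFiber_of_neg h hfa ha, fun hc => ?_⟩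
      simpa [Real.sqrt_eq_zero', h.not_ge] using hc 1 h1 0 h0
    · refine ⟨_, isHoloDiskOnFiber_of_pos h hfa ha, fun hc => ?_⟩
      simpa [Real.sqrt_eq_zero', h.not_ge] using hc 1 h1 0 h0

/-- For `λ ≠ 0`, the fiber `T_{s,λ}` bounds a nonconstant holomorphic disk in
`Y` iff `f` has a zero `a` with `|a| = e^s` (for `λ > 0` such a disk is
`φ(w) = (√(2λ)·w, 0, a)`, for `λ < 0` it is `φ(w) = (0, √(−2λ)·w, a)`); thus the wall is
`{(s,λ) : s = log|a_i| for some zero a_i of f}`. -/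
theorem stmt_9 (f : Polynomial ℂ)
    (hf : ∀ w : ℂ, f.eval w = 0 → (Polynomial.derivative f).eval w ≠ 0)
    (s lam : ℝ) (hlam : lam ≠ 0) :
    ((∃ φ : ℂ → ℂ × ℂ × ℂ, IsHoloDiskOnFiber f s lam φ ∧
        ¬ ∀ w₁ ∈ closedBall (0 : ℂ) 1, ∀ w₂ ∈ closedBall (0 : ℂ) 1, φ w₁ = φ w₂) ↔
      ∃ a : ℂ, f.eval a = 0 ∧ ‖a‖ = Real.exp s) ∧
    (0 < lam → ∀ a : ℂ, f.eval a = 0 → ‖a‖ = Real.exp s →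
      IsHoloDiskOnFiber f s lam
        (fun w => ((Real.sqrt (2 * lam) : ℂ) * w, (0 : ℂ), a))) ∧
    (lam < 0 → ∀ a : ℂ, f.eval a = 0 → ‖a‖ = Real.exp s →
      IsHoloDiskOnFiber f s lam
        (fun w => ((0 : ℂ), (Real.sqrt (-(2 * lam)) : ℂ) * w, a))) :=
  stmt_9_general f s lam hlam
end

section
/- Let f : ℂ → ℂ be a polynomial and Y = {(u,v,z) ∈ ℂ² × ℂˣ : uv = f(z)}, with Kähler form ω_p(X_1,X_2) = Im(a_1·conj(a_2)) + Im(b_1·conj(b_2)) + Im(c_1·conj(c_2))/|z|² at p = (u,v,z). Let p = (u,v,z) ∈ Y with |u| = |v| and (u,v) ≠ (0,0), and let d ∈ ℂ. Then the Lagrangian L_γ = {(u,v,γ(t)) : |u| = |v|} associated to a path γ with tangent direction d at z is isotropic at p: for any two vectors X_1 = (a_1,b_1,c_1), X_2 = (a_2,b_2,c_2) ∈ ℂ³ satisfying, for j = 1,2, the conditions c_j = t_j·d with t_j ∈ ℝ, v·a_j + u·b_j = f′(z)·c_j, and Re(conj(u)·a_j) = Re(conj(v)·b_j), one has ω_p(X_1,X_2)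 = 0. -/
/-!
Put `x = ū a` and `y = v̄ b`. Since `|u| = |v|`, this rescales both `Im (a₁ ā₂)` and
`Im (b₁ b̄₂)` by the same factor `|u|²`; the second tangency condition becomes `Re x = Re y`,
and multiplying the linearised equation `v a + u b = f′(z) c` by `ū v̄` shows that `x + y` is a
real multiple of the fixed vector `ū v̄ f′(z) d`. Polarisation writes
`Im (x₁ x̄₂) + Im (y₁ ȳ₂)` as half the sum of the same expressions for `x ± y`; both pairs
`x₁ ± y₁, x₂ ± y₂` are real multiples of one vector (`x - y` is purely imaginary), so both
vanish. The `dz ∧ dz̄` term vanishes because `c₁, c₂` are real multiples of `d`.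
-/

open Complex

open ComplexConjugate

namespace Complex

theorem im_ofReal_mul_mul_conj_ofReal_mul (s t : ℝ) (K : ℂ) :
    (s * K * conj (t * K)).im = 0 := by
  rw [map_mul, conj_ofReal, show (s : ℂ) * K * (t * conj K) = s * t * (K * conj K) by ring,
    mul_conj]
  norm_cast

theorem im_mul_conj_add_im_mul_conj (x₁ x₂ y₁ y₂ : ℂ) :
    (x₁ * conj x₂).im + (y₁ * conj y₂).im =
      ((x₁ + y₁) * conj (x₂ + y₂)).im / 2 + ((x₁ - y₁) * conj (x₂ - y₂)).im / 2 := by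
  simp only [mul_im, map_add, map_sub, add_re, add_im, sub_re, sub_im, conj_re, conj_im]
  ring

theorem sub_eq_im_mul_I_of_re_eq {x y : ℂ} (h : x.re = y.re) : x - y = (x - y).im * I := by
  apply Complex.ext <;> simp [h]

theorem im_mul_conj_add_im_mul_conj_eq_zero_s10 {x₁ x₂ y₁ y₂ K : ℂ} {t₁ t₂ : ℝ}
    (hre₁ : x₁.re = y₁.re) (hre₂ : x₂.re = y₂.re)
    (hsum₁ : x₁ + y₁ = t₁ * K) (hsum₂ : x₂ + y₂ = t₂ * K) :
    (x₁ * conj x₂).im + (y₁ * conj y₂).im = 0 := by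
  rw [im_mul_conj_add_im_mul_conj, hsum₁, hsum₂, sub_eq_im_mul_I_of_re_eq hre₁,
    sub_eq_im_mul_I_of_re_eq hre₂, im_ofReal_mul_mul_conj_ofReal_mul,
    im_ofReal_mul_mul_conj_ofReal_mul]
  simp

theorem im_conj_mul_mul_conj_conj_mul (u a₁ a₂ : ℂ) :
    (conj u * a₁ * conj (conj u * a₂)).im = normSq u * (a₁ * conj a₂).im := by
  rw [map_mul, conj_conj, show conj u * a₁ * (u * conj a₂) = u * conj u * (a₁ * conj a₂) by ring,
    mul_conj, im_ofReal_mul]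

end Complex

theorem im_mul_conj_add_im_mul_conj_eq_zero_of_norm_eq {u v K a₁ b₁ a₂ b₂ : ℂ} {t₁ t₂ : ℝ}
    (hu : u ≠ 0) (habs : ‖u‖ = ‖v‖)
    (htan₁ : v * a₁ + u * b₁ = t₁ * K) (htan₂ : v * a₂ + u * b₂ = t₂ * K)
    (hre₁ : (conj u * a₁).re = (conj v * b₁).re) (hre₂ : (conj u * a₂).re = (conj v * b₂).re) :
    (a₁ * conj a₂).im + (b₁ * conj b₂).im = 0 := by
  have hnorm : normSq v = normSq u := by rw [← Complex.sq_norm, ← Complex.sq_norm, habs]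
  have hu' : (normSq u : ℂ) ≠ 0 := by exact_mod_cast normSq_pos.mpr hu |>.ne'
  have hsum {a b : ℂ} {t : ℝ} (h : v * a + u * b = t * K) :
      conj u * a + conj v * b = t * (conj (u * v) * K / normSq u) := by
    have huu : (normSq u : ℂ) = u * conj u := (mul_conj u).symm
    have hvv : (normSq u : ℂ) = v * conj v := by rw [← hnorm, mul_conj]
    rw [mul_div_assoc', eq_div_iff hu', map_mul]
    linear_combination conj u * a * hvv + conj v * b * huu + conj u * conj v * h
  have key := im_mul_conj_add_im_mul_conj_eq_zero_s10 hre₁ hre₂ (hsum htan₁) (hsum htan₂)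
  rw [im_conj_mul_mul_conj_conj_mul, im_conj_mul_mul_conj_conj_mul, hnorm, ← mul_add] at key
  exact (mul_eq_zero.mp key).resolve_left (normSq_pos.mpr hu).ne'

theorem stmt_10_general (f : Polynomial ℂ) (u v z : ℂ)
    (habs : ‖u‖ = ‖v‖) (huv : (u, v) ≠ ((0 : ℂ), (0 : ℂ)))
    (d : ℂ) (a₁ b₁ c₁ a₂ b₂ c₂ : ℂ)
    (hc₁ : ∃ t₁ : ℝ, c₁ = (t₁ : ℂ) * d) (hc₂ : ∃ t₂ : ℝ, c₂ = (t₂ : ℂ) * d)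
    (htan₁ : v * a₁ + u * b₁ = (Polynomial.derivative f).eval z * c₁)
    (htan₂ : v * a₂ + u * b₂ = (Polynomial.derivative f).eval z * c₂)
    (hre₁ : ((starRingEnd ℂ) u * a₁).re = ((starRingEnd ℂ) v * b₁).re)
    (hre₂ : ((starRingEnd ℂ) u * a₂).re = ((starRingEnd ℂ) v * b₂).re) :
    omegaY (u, v, z) (a₁, b₁, c₁) (a₂, b₂, c₂) = 0 := by
  obtain ⟨t₁, rfl⟩ := hc₁
  obtain ⟨t₂, rfl⟩ := hc₂
  have hu : u ≠ 0 := by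
    rintro rfl
    exact huv (by simpa [eq_comm] using habs)
  have htan {a b : ℂ} {t : ℝ} (h : v * a + u * b = (Polynomial.derivative f).eval z * (t * d)) :
      v * a + u * b = t * ((Polynomial.derivative f).eval z * d) := by
    rw [h]; ring
  simp only [omegaY]
  rw [im_ofReal_mul_mul_conj_ofReal_mul, zero_div, add_zero]
  exact im_mul_conj_add_im_mul_conj_eq_zero_of_norm_eq hu habs (htan htan₁) (htan htan₂)
    hre₁ hre₂

/-- The Lagrangian `L_γ = {(u,v,γ(t)) : |u| = |v|}` in
`Y = {uv = f(z)} ⊆ ℂ² × ℂˣ`, associated to a path `γ` with tangent direction `d` at `z`,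
is isotropic at `p = (u,v,z)` with `|u| = |v|`, `(u,v) ≠ (0,0)`: any two vectors
`(a,b,c) ∈ ℂ³` with `c` a real multiple of `d`, `v·a + u·b = f′(z)·c` and
`Re(conj u·a) = Re(conj v·b)` pair to zero under `ω_p`. -/
theorem stmt_10 (f : Polynomial ℂ) (u v z : ℂ) (hz : z ≠ 0) (hY : u * v = f.eval z)
    (habs : ‖u‖ = ‖v‖) (huv : (u, v) ≠ ((0 : ℂ), (0 : ℂ)))
    (d : ℂ) (a₁ b₁ c₁ a₂ b₂ c₂ : ℂ)
    (hc₁ : ∃ t₁ : ℝ, c₁ = (t₁ : ℂ) * d) (hc₂ : ∃ t₂ : ℝ, c₂ = (t₂ : ℂ) * d)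
    (htan₁ : v * a₁ + u * b₁ = (Polynomial.derivative f).eval z * c₁)
    (htan₂ : v * a₂ + u * b₂ = (Polynomial.derivative f).eval z * c₂)
    (hre₁ : ((starRingEnd ℂ) u * a₁).re = ((starRingEnd ℂ) v * b₁).re)
    (hre₂ : ((starRingEnd ℂ) u * a₂).re = ((starRingEnd ℂ) v * b₂).re) :
    omegaY (u, v, z) (a₁, b₁, c₁) (a₂, b₂, c₂) = 0 :=
  stmt_10_general f u v z habs huv d a₁ b₁ c₁ a₂ b₂ c₂ hc₁ hc₂ htan₁ htan₂ hre₁ hre₂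
end

section
/- Let n ≥ 2 and let f : (ℂˣ)^{n−1} → ℂ be a Laurent polynomial, and let Y = {(u,v,z_1,…,z_{n−1}) ∈ ℂ² × (ℂˣ)^{n−1} : uv = f(z_1,…,z_{n−1})}. Let φ = (u,v,z_1,…,z_{n−1}) : D̄ → ℂ^{n+1} be continuous on the closed unit disk D̄ and holomorphic on the open disk, with φ(D̄) ⊆ Y. Suppose there exist r_1,…,r_{n−1} > 0 and λ ∈ ℝ such that on the boundary circle |w| = 1 one has |z_j(w)| = r_j for j = 1,…,n−1 and |u(w)|² − |v(w)|² = 2λ. Then each z_j is constant on D̄, say z_j ≡ z_j⁰; and if moreover f(z_1⁰,…,z_{n−1}⁰) ≠ 0, then φ is constant. Hence a nonconstant holomorphic disk with boundary on a torus fiber is contained in a singular fiber of the conic bundle π(u,v,z) = z, i.e., its (constant) base point z⁰ satisfies f(z⁰) = 0. -/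
open Complex Metric Set Function

/-! Maximum modulus applied to `g` and to `1 / g`: a holomorphic disk in `ℂˣ` whose boundary
lies on a circle `|g| = c` has `|g| ≡ c`, hence is constant. This makes every `z_j` constant.
Once `f(z⁰) ≠ 0`, the equations `|u| |v| = |f(z⁰)|` and `|u|² - |v|² = 2λ` on the boundary circle
pin `|u|` there to one value, so `u` is constant by the same argument, and then so is
`v = f(z⁰) / u`. -/

theorem norm_eqOn_closure_of_norm_eqOn_frontier {U : Set ℂ} {g : ℂ → ℂ} {c : ℝ}
    (hU : Bornology.IsBounded U) (hg : DiffContOnCl ℂ g U) (hne : ∀ z ∈ closure U, g z ≠ 0)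
    (hfr : ∀ z ∈ frontier U, ‖g z‖ = c) {w : ℂ} (hw : w ∈ closure U) :
    ‖g w‖ = c := by
  have hinv : DiffContOnCl ℂ (fun z => (g z)⁻¹) U :=
    ⟨hg.differentiableOn.inv fun z hz => hne z (subset_closure hz), hg.continuousOn.inv₀ hne⟩
  have hle : ‖g w‖ ≤ c :=
    norm_le_of_forall_mem_frontier_norm_le hU hg (fun z hz => (hfr z hz).le) hw
  have hinv_le : ‖g w‖⁻¹ ≤ c⁻¹ := by
    simpa only [norm_inv] using norm_le_of_forall_mem_frontier_norm_le hU hinv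
      (fun z hz => by rw [norm_inv, hfr z hz]) hw
  have hgw : 0 < ‖g w‖ := norm_pos_iff.mpr (hne w hw)
  have hc : 0 < c := inv_pos.mp ((inv_pos.mpr hgw).trans_le hinv_le)
  exact le_antisymm hle ((inv_le_inv₀ hgw hc).mp hinv_le)

theorem eqOn_closure_of_norm_eqOn_frontier {U : Set ℂ} {g : ℂ → ℂ} {c : ℝ}
    (hUb : Bornology.IsBounded U) (hUo : IsOpen U) (hUc : IsPreconnected U)
    (hg : DiffContOnCl ℂ g U)
    (hne : ∀ z ∈ closure U, g z ≠ 0) (hfr : ∀ z ∈ frontier U, ‖g z‖ = c) {z₀ : ℂ}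
    (hz₀ : z₀ ∈ U) : EqOn g (const ℂ (g z₀)) (closure U) := by
  have hmax : IsMaxOn (norm ∘ g) U z₀ := fun w hw => by
    simp only [mem_ofPred_eq, comp_apply,
      norm_eqOn_closure_of_norm_eqOn_frontier hUb hg hne hfr (subset_closure hw),
      norm_eqOn_closure_of_norm_eqOn_frontier hUb hg hne hfr (subset_closure hz₀), le_refl]
  exact Complex.eqOn_closure_of_isPreconnected_of_isMaxOn_norm hUc hUo hg hz₀ hmax

theorem eqOn_closedBall_of_norm_eqOn_sphere {g : ℂ → ℂ} {a : ℂ} {R c : ℝ} (hR : 0 < R)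
    (hc : ContinuousOn g (closedBall a R)) (hd : DifferentiableOn ℂ g (ball a R))
    (hne : ∀ z ∈ closedBall a R, g z ≠ 0) (hb : ∀ z ∈ sphere a R, ‖g z‖ = c) :
    EqOn g (const ℂ (g a)) (closedBall a R) := by
  have hcl : closure (ball a R) = closedBall a R := closure_ball a hR.ne'
  rw [← hcl] at hc hne ⊢
  exact eqOn_closure_of_norm_eqOn_frontier isBounded_ball isOpen_ball
    (convex_ball a R).isPreconnected ⟨hd, hc⟩ hne
    (fun z hz => hb z (frontier_ball a hR.ne' ▸ hz)) (mem_ball_self hR)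

theorem eq_sqrt_of_mul_eq_of_sq_sub_sq_eq {A B F lam : ℝ} (hA : 0 ≤ A)
    (hAB : A * B = F) (h : A ^ 2 - B ^ 2 = 2 * lam) :
    A = √(lam + √(lam ^ 2 + F ^ 2)) := by
  -- `(A² + B²)² = (A² - B²)² + 4 (A B)²`
  have hsq : (A ^ 2 + B ^ 2) ^ 2 = 2 ^ 2 * (lam ^ 2 + F ^ 2) := by
    rw [← hAB]
    linear_combination (A ^ 2 - B ^ 2 + 2 * lam) * h
  have hsum : A ^ 2 + B ^ 2 = 2 * √(lam ^ 2 + F ^ 2) := by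
    rw [← Real.sqrt_sq (by positivity : 0 ≤ A ^ 2 + B ^ 2), hsq,
      Real.sqrt_mul (by positivity), Real.sqrt_sq zero_le_two]
  rw [← Real.sqrt_sq hA]
  congr 1
  linarith

theorem eqOn_closedBall_of_mul_eq_of_norm_sq_sub_norm_sq_eq {u v : ℂ → ℂ} {a F : ℂ}
    {R lam : ℝ} (hR : 0 < R) (hF : F ≠ 0) (huc : ContinuousOn u (closedBall a R))
    (hud : DifferentiableOn ℂ u (ball a R)) (huv : ∀ w ∈ closedBall a R, u w * v w = F)
    (hb : ∀ w ∈ sphere a R, ‖u w‖ ^ 2 - ‖v w‖ ^ 2 = 2 * lam) :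
    EqOn u (const ℂ (u a)) (closedBall a R) ∧ EqOn v (const ℂ (v a)) (closedBall a R) := by
  have hune : ∀ w ∈ closedBall a R, u w ≠ 0 := fun w hw h => hF <| by
    rw [← huv w hw, h, zero_mul]
  have hu : EqOn u (const ℂ (u a)) (closedBall a R) :=
    eqOn_closedBall_of_norm_eqOn_sphere (c := √(lam + √(lam ^ 2 + ‖F‖ ^ 2))) hR huc hud hune
      fun w hw => eq_sqrt_of_mul_eq_of_sq_sub_sq_eq (norm_nonneg _)
        (by rw [← norm_mul, huv w (sphere_subset_closedBall hw)]) (hb w hw)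
  have ha : a ∈ closedBall a R := mem_closedBall_self hR.le
  refine ⟨hu, fun w hw => mul_left_cancel₀ (hune a ha) ?_⟩
  have huw : u w = u a := hu hw
  calc u a * v w = u w * v w := by rw [huw]
    _ = u a * v a := (huv w hw).trans (huv a ha).symm

theorem stmt_12_general (n : ℕ)
    (f : (Fin (n - 1) → ℂ) → ℂ)
    (φ : ℂ → ℂ × ℂ × (Fin (n - 1) → ℂ))
    (hcont : ContinuousOn φ (closedBall (0 : ℂ) 1))
    (hhol : DifferentiableOn ℂ φ (ball (0 : ℂ) 1))
    (hY : ∀ w ∈ closedBall (0 : ℂ) 1,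
      (φ w).1 * (φ w).2.1 = f (φ w).2.2 ∧ ∀ j, (φ w).2.2 j ≠ 0)
    (r : Fin (n - 1) → ℝ) (lam : ℝ)
    (hbdry : ∀ w : ℂ, ‖w‖ = 1 →
      (∀ j, ‖(φ w).2.2 j‖ = r j) ∧
      ‖(φ w).1‖ ^ 2 - ‖(φ w).2.1‖ ^ 2 = 2 * lam) :
    ∃ z₀ : Fin (n - 1) → ℂ,
      (∀ w ∈ closedBall (0 : ℂ) 1, (φ w).2.2 = z₀) ∧
      (f z₀ ≠ 0 → ∀ w₁ ∈ closedBall (0 : ℂ) 1, ∀ w₂ ∈ closedBall (0 : ℂ) 1,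
        φ w₁ = φ w₂) := by
  have hz : ∀ w ∈ closedBall (0 : ℂ) 1, (φ w).2.2 = (φ 0).2.2 := fun w hw => funext fun j =>
    eqOn_closedBall_of_norm_eqOn_sphere one_pos
      ((continuous_apply j).comp_continuousOn hcont.snd.snd)
      (differentiableOn_pi.mp hhol.snd.snd j) (fun w hw => (hY w hw).2 j)
      (fun w hw => (hbdry w (mem_sphere_zero_iff_norm.mp hw)).1 j) hw
  refine ⟨(φ 0).2.2, hz, fun hf => ?_⟩
  obtain ⟨hu, hv⟩ := eqOn_closedBall_of_mul_eq_of_norm_sq_sub_norm_sq_eq one_pos hf hcont.fst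
    hhol.fst (fun w hw => hz w hw ▸ (hY w hw).1)
    (fun w hw => (hbdry w (mem_sphere_zero_iff_norm.mp hw)).2)
  have hφ : ∀ w ∈ closedBall (0 : ℂ) 1, φ w = φ 0 := fun w hw =>
    Prod.ext (hu hw) (Prod.ext (hv hw) (hz w hw))
  intro w₁ hw₁ w₂ hw₂
  rw [hφ w₁ hw₁, hφ w₂ hw₂]

/-- Let `f` be a Laurent polynomial on `(ℂˣ)^{n−1}` and
`Y = {uv = f(z)} ⊆ ℂ² × (ℂˣ)^{n−1}`. For a holomorphic disk `φ = (u,v,z₁,…,z_{n−1})` in `Y`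
whose boundary lies on a torus fiber (`|z_j| = r_j`, `|u|² − |v|² = 2λ` on `∂D̄`), each
`z_j` is constant, say `z_j ≡ z_j⁰`; and if moreover `f(z⁰) ≠ 0` then `φ` is constant.
Hence a nonconstant such disk is contained in a singular fiber of the conic bundle
`π(u,v,z) = z`. -/
theorem stmt_12 (n : ℕ) (hn : 2 ≤ n)
    (f : (Fin (n - 1) → ℂ) → ℂ)
    -- `f` is a Laurent polynomial on `(ℂˣ)^{n−1}`
    (hf : ∃ (m : ℕ) (a : Fin m → ℂ) (e : Fin m → Fin (n - 1) → ℤ),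
      ∀ z : Fin (n - 1) → ℂ, (∀ j, z j ≠ 0) →
        f z = ∑ i : Fin m, a i * ∏ j : Fin (n - 1), z j ^ (e i j))
    (φ : ℂ → ℂ × ℂ × (Fin (n - 1) → ℂ))
    (hcont : ContinuousOn φ (closedBall (0 : ℂ) 1))
    (hhol : DifferentiableOn ℂ φ (ball (0 : ℂ) 1))
    (hY : ∀ w ∈ closedBall (0 : ℂ) 1,
      (φ w).1 * (φ w).2.1 = f (φ w).2.2 ∧ ∀ j, (φ w).2.2 j ≠ 0)
    (r : Fin (n - 1) → ℝ) (hr : ∀ j, 0 < r j) (lam : ℝ)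
    (hbdry : ∀ w : ℂ, ‖w‖ = 1 →
      (∀ j, ‖(φ w).2.2 j‖ = r j) ∧
      ‖(φ w).1‖ ^ 2 - ‖(φ w).2.1‖ ^ 2 = 2 * lam) :
    ∃ z₀ : Fin (n - 1) → ℂ,
      (∀ w ∈ closedBall (0 : ℂ) 1, (φ w).2.2 = z₀) ∧
      (f z₀ ≠ 0 → ∀ w₁ ∈ closedBall (0 : ℂ) 1, ∀ w₂ ∈ closedBall (0 : ℂ) 1,
        φ w₁ = φ w₂) :=
  stmt_12_general n f φ hcont hhol hY r lam hbdry
end
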